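/- Let w, u, v, g_h, g_v ∈ ℝⁿ with wᵢ > 0, g_hᵢ² + g_vᵢ² ≤ 1 for all i. Suppose Σᵢ wᵢ (g_hᵢ uᵢ + g_vᵢ vᵢ) = Σᵢ wᵢ sqrt(uᵢ² + vᵢ²), and there exists an index î with g_hî² + g_vî² < 1 and uî² + vî² > 0. Then this yields a contradiction; i.e., no such configuration exists. -/
import Mathlib

lemma cs_aux (a b c d : ℝ) : a * c + b * d ≤ Real.sqrt (a^2 + b^2) * Real.sqrt (c^2 + d^2) := by
  have h1 : (a * c + b * d) ^ 2 ≤ (a^2 + b^2) * (c^2 + d^2) := by nlinarith [sq_nonneg (a*d - b*c)]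
  have h2 : Real.sqrt (a^2+b^2) * Real.sqrt (c^2+d^2) = Real.sqrt ((a^2+b^2)*(c^2+d^2)) := by
    rw [Real.sqrt_mul (by positivity)]
  rw [h2]
  calc a * c + b * d ≤ |a * c + b * d| := le_abs_self _
    _ = Real.sqrt ((a*c+b*d)^2) := (Real.sqrt_sq_eq_abs _).symm
    _ ≤ Real.sqrt ((a^2+b^2)*(c^2+d^2)) := Real.sqrt_le_sqrt h1

theorem stmt_17 (n : ℕ) (w u v gh gv : Fin n → ℝ)
    (hw : ∀ i, 0 < w i) (hg : ∀ i, gh i ^ 2 + gv i ^ 2 ≤ 1)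
    (heq : ∑ i, w i * (gh i * u i + gv i * v i) =
      ∑ i, w i * Real.sqrt (u i ^ 2 + v i ^ 2))
    (i0 : Fin n) (hstrict : gh i0 ^ 2 + gv i0 ^ 2 < 1)
    (hnz : 0 < u i0 ^ 2 + v i0 ^ 2) :
    False := by
  have key : ∑ i, w i * (gh i * u i + gv i * v i) <
      ∑ i, w i * Real.sqrt (u i ^ 2 + v i ^ 2) := by
    apply Finset.sum_lt_sum
    · intro i _
      have := cs_aux (gh i) (gv i) (u i) (v i)
      have h1 : Real.sqrt (gh i ^2 + gv i ^2) ≤ 1 := by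
        rw [show (1:ℝ) = Real.sqrt 1 from (Real.sqrt_one).symm]
        exact Real.sqrt_le_sqrt (hg i)
      have h2 : gh i * u i + gv i * v i ≤ Real.sqrt (u i ^2 + v i ^2) := by
        calc gh i * u i + gv i * v i ≤ Real.sqrt (gh i ^2 + gv i ^2) * Real.sqrt (u i ^2 + v i ^2) := this
          _ ≤ 1 * Real.sqrt (u i ^2 + v i ^2) := by
              exact mul_le_mul_of_nonneg_right h1 (Real.sqrt_nonneg _)
          _ = _ := one_mul _
      exact mul_le_mul_of_nonneg_left h2 (hw i).le
    · refine ⟨i0, Finset.mem_univ _, ?_⟩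
      have h1 : Real.sqrt (gh i0 ^2 + gv i0 ^2) < 1 := by
        rw [show (1:ℝ) = Real.sqrt 1 from (Real.sqrt_one).symm]
        exact Real.sqrt_lt_sqrt (by positivity) (by simpa using hstrict)
      have h3 : 0 < Real.sqrt (u i0 ^2 + v i0 ^2) := Real.sqrt_pos.mpr hnz
      have h2 : gh i0 * u i0 + gv i0 * v i0 < Real.sqrt (u i0 ^2 + v i0 ^2) := by
        calc gh i0 * u i0 + gv i0 * v i0
            ≤ Real.sqrt (gh i0 ^2 + gv i0 ^2) * Real.sqrt (u i0 ^2 + v i0 ^2) :=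
              cs_aux _ _ _ _
          _ < 1 * Real.sqrt (u i0 ^2 + v i0 ^2) := by
              exact mul_lt_mul_of_pos_right h1 h3
          _ = _ := one_mul _
      exact mul_lt_mul_of_pos_left h2 (hw i0)
  linarith
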